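/- Let G = G(Z_1, …, Z_L) be the graph defined from the matrices Z_1, …, Z_L. Then: (i) the maximum (s,t)-flow value of G equals 2r; and (ii) for every k ∈ {1, …, L} and i, j ∈ {1, …, r}, setting e_1 = (x_{k,i}, x_{k+1,i}) and e_2 = (y_{k−1,j}, y_{k,j}) (with the stated boundary conventions), the maximum (s,t)-flow value of G − {e_1, e_2} equals 2r − 1 if Z_k[i,j] = 1 and equals 2r − 2 if Z_k[i,j] = 0. -/

import Mathlib

open Finset

/-- A finite directed multigraph on vertex type `V` with edge type `E`:
each edge `e` has a source `src e` and a target `tgt e`. -/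
structure Digraph' (V E : Type) where
  src : E → V
  tgt : E → V

namespace Digraph'

variable {V E : Type} [Fintype V] [DecidableEq V] [Fintype E] [DecidableEq E]

/-- `h : E → ℕ` satisfies flow conservation at every vertex other than `s` and `t`:
the sum over incoming edges equals the sum over outgoing edges. -/
def Conserves (G : Digraph' V E) (s t : V) (h : E → ℕ) : Prop :=
  ∀ v : V, v ≠ s → v ≠ t →
    ∑ e ∈ univ.filter (fun e => G.tgt e = v), h e =
      ∑ e ∈ univ.filter (fun e => G.src e = v), h e

/-- The value of `h`: the net flow out of `s`. -/
def flowValue (G : Digraph' V E) (s : V) (h : E → ℕ) : ℤ :=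
  (∑ e ∈ univ.filter (fun e => G.src e = s), (h e : ℤ)) -
    ∑ e ∈ univ.filter (fun e => G.tgt e = s), (h e : ℤ)

/-- An `(s,t)`-flow of a unit-capacity digraph: a `{0,1}`-valued function on edges
satisfying flow conservation at every vertex other than `s` and `t`. -/
def IsFlow (G : Digraph' V E) (s t : V) (f : E → ℕ) : Prop :=
  (∀ e, f e ≤ 1) ∧ G.Conserves s t f

/-- One step along an edge not belonging to `F`. -/
def stepAvoid (G : Digraph' V E) (F : Finset E) (u v : V) : Prop :=
  ∃ e, e ∉ F ∧ G.src e = u ∧ G.tgt e = v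

/-- Reachability by a directed path using no edge of `F`. -/
def ReachAvoid (G : Digraph' V E) (F : Finset E) : V → V → Prop :=
  Relation.ReflTransGen (G.stepAvoid F)

/-- `C` is an `(s,t)`-cut: after deleting the edges of `C` there is no directed
path from `s` to `t`. -/
def IsCut (G : Digraph' V E) (s t : V) (C : Finset E) : Prop :=
  ¬ G.ReachAvoid C s t

/-- An `(s,t)`-min-cut: an `(s,t)`-cut of minimum cardinality. -/
def IsMinCut (G : Digraph' V E) (s t : V) (C : Finset E) : Prop :=
  G.IsCut s t C ∧ ∀ C' : Finset E, G.IsCut s t C' → C.card ≤ C'.card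

/-- A minimal `(s,t)`-cut: no proper subset of it is an `(s,t)`-cut. -/
def IsMinimalCut (G : Digraph' V E) (s t : V) (C : Finset E) : Prop :=
  G.IsCut s t C ∧ ∀ C' : Finset E, C' ⊂ C → ¬ G.IsCut s t C'

/-- An edge is critical if it belongs to some `(s,t)`-min-cut. -/
def Critical (G : Digraph' V E) (s t : V) (e : E) : Prop :=
  ∃ C : Finset E, G.IsMinCut s t C ∧ e ∈ C

/-- `m` is the maximum `(s,t)`-flow value of `G − F`, i.e. the largest value of an
`(s,t)`-flow of `G` vanishing on every edge of `F`. -/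
def IsMaxFlowValue (G : Digraph' V E) (s t : V) (F : Finset E) (m : ℤ) : Prop :=
  (∃ f, G.IsFlow s t f ∧ (∀ e ∈ F, f e = 0) ∧ G.flowValue s f = m) ∧
    ∀ f, G.IsFlow s t f → (∀ e ∈ F, f e = 0) → G.flowValue s f ≤ m

/-- The residual graph `G_f` of a `{0,1}`-flow `f`: each edge with `f e = 1`
is reversed, each edge with `f e = 0` is kept as is. -/
def residual (G : Digraph' V E) (f : E → ℕ) : Digraph' V E where
  src e := if f e = 1 then G.tgt e else G.src e
  tgt e := if f e = 1 then G.src e else G.tgt e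

end Digraph'

/-- Vertices of the lower-bound graph `G(Z_1,…,Z_L)`: a source `s`, a sink `t`, and
vertices `x k i`, `y k i` (for paper indices `k+1 ∈ {1,…,L}`, `i+1 ∈ {1,…,r}`). -/
inductive Vtx (L r : ℕ) : Type where
  | s : Vtx L r
  | t : Vtx L r
  | x : Fin L → Fin r → Vtx L r
  | y : Fin L → Fin r → Vtx L r
deriving DecidableEq, Fintype

/-- The vertex `x_{k,i}` with boundary convention `x_{0,i} = s`, `x_{L+1,i} = t`;
here `k` ranges over `0,…,L+1`. -/
def xAt (L r : ℕ) (k : ℕ) (i : Fin r) : Vtx L r :=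
  if k = 0 then .s else if h : k - 1 < L then .x ⟨k - 1, h⟩ i else .t

/-- The vertex `y_{k,i}` with boundary convention `y_{0,i} = s`, `y_{L+1,i} = t`. -/
def yAt (L r : ℕ) (k : ℕ) (i : Fin r) : Vtx L r :=
  if k = 0 then .s else if h : k - 1 < L then .y ⟨k - 1, h⟩ i else .t

/-- Potential edges of `G(Z_1,…,Z_L)`: the path edges `(x_{k,i}, x_{k+1,i})` and
`(y_{k,i}, y_{k+1,i})` for `0 ≤ k ≤ L`, and cross edges `(x_{k,i}, y_{k,j})`. -/
inductive Edg (L r : ℕ) : Type where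
  | ex : Fin (L + 1) → Fin r → Edg L r
  | ey : Fin (L + 1) → Fin r → Edg L r
  | cross : Fin L → Fin r → Fin r → Edg L r
deriving DecidableEq, Fintype

/-- A potential edge is a real edge iff it is a path edge, or a cross edge
`(x_{k,i}, y_{k,j})` with `Z_k[i,j] = 1`. -/
def validEdge {L r : ℕ} (Z : Fin L → Fin r → Fin r → Bool) : Edg L r → Bool
  | .cross k i j => Z k i j
  | _ => true

/-- The graph `G(Z_1,…,Z_L)` from the lower-bound construction. -/
def matrixGraph {L r : ℕ} (Z : Fin L → Fin r → Fin r → Bool) :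
    Digraph' (Vtx L r) {e : Edg L r // validEdge Z e = true} where
  src e := match e.1 with
    | .ex k i => xAt L r k.val i
    | .ey k i => yAt L r k.val i
    | .cross k i _ => Vtx.x k i
  tgt e := match e.1 with
    | .ex k i => xAt L r (k.val + 1) i
    | .ey k i => yAt L r (k.val + 1) i
    | .cross k _ j => Vtx.y k j

/-!
Lower bounds are explicit flows. The `2r` row paths `s → x_{1,i} → ⋯ → x_{L,i} → t` and
`s → y_{1,j} → ⋯ → t` give value `2r`. Deleting `e₁` and `e₂` kills the `x`-row `i` and the
`y`-row `j`; if `Z_k[i,j] = 1` they are replaced by the single path that runs along `x`-row `i`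
up to `x_{k,i}`, crosses to `y_{k,j}` and continues along `y`-row `j`.

Upper bounds come from counting the undeleted edges leaving a set `S ∋ s` with `t ∉ S`: for (i)
`S = {s}`, and for (ii) `S` consists of the `x`-vertices of layers `< k`, the `y`-vertices of
layers `≤ k`, with `x_{k,i}` added and `y_{k,j}` removed. Apart from `e₁` and `e₂`, the edges
leaving this `S` are `r - 1` edges of `x`-rows, `r - 1` edges of `y`-rows, and `(x_{k,i}, y_{k,j})`
when `Z_k[i,j] = 1`.
-/

namespace Digraph'

variable {V E : Type} [DecidableEq V] [Fintype E]

theorem flowValue_eq_sum_sub_sum (G : Digraph' V E) {s t : V} {f : E → ℕ}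
    (hf : G.Conserves s t f) {S : Finset V} (hs : s ∈ S) (ht : t ∉ S) :
    G.flowValue s f = ∑ e with G.src e ∈ S, (f e : ℤ) - ∑ e with G.tgt e ∈ S, (f e : ℤ) := by
  have hnet : G.flowValue s f = ∑ v ∈ S,
      (∑ e with G.src e = v, (f e : ℤ) - ∑ e with G.tgt e = v, (f e : ℤ)) := by
    rw [Finset.sum_eq_single_of_mem s hs]
    · rfl
    intro v hv hvs
    rw [sub_eq_zero]
    exact_mod_cast (hf v hvs (ne_of_mem_of_not_mem hv ht)).symm
  rw [hnet, Finset.sum_sub_distrib, Finset.sum_fiberwise_eq_sum_filter univ S G.src,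
    Finset.sum_fiberwise_eq_sum_filter univ S G.tgt]

theorem flowValue_le_card_of_cut (G : Digraph' V E) {s t : V} {f : E → ℕ}
    (hf : G.IsFlow s t f) {F : Finset E} (hF : ∀ e ∈ F, f e = 0) {S : Finset V} (hs : s ∈ S)
    (ht : t ∉ S) {T : Finset E} (hT : ∀ e, G.src e ∈ S → G.tgt e ∉ S → e ∉ F → e ∈ T) :
    G.flowValue s f ≤ T.card := by
  have hsplit := Finset.sum_filter_add_sum_filter_not (univ.filter fun e => G.src e ∈ S)
    (fun e => G.tgt e ∈ S) (fun e => (f e : ℤ))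
  simp only [Finset.filter_filter] at hsplit
  have hinside :
      ∑ e with G.src e ∈ S ∧ G.tgt e ∈ S, (f e : ℤ) ≤ ∑ e with G.tgt e ∈ S, (f e : ℤ) :=
    Finset.sum_le_sum_of_subset_of_nonneg (Finset.monotone_filter_right _ fun _ _ h => h.2)
      fun _ _ _ => by positivity
  have hleaving : ∑ e with G.src e ∈ S ∧ G.tgt e ∉ S, f e ≤ T.card :=
    calc ∑ e with G.src e ∈ S ∧ G.tgt e ∉ S, f e ≤ ∑ e ∈ T, f e :=
          Finset.sum_le_sum_of_ne_zero fun e he hfe => by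
            simp only [Finset.mem_filter] at he
            exact hT e he.2.1 he.2.2 fun heF => hfe (hF e heF)
      _ ≤ T.card := by simpa using Finset.sum_le_card_nsmul T f 1 fun e _ => hf.1 e
  zify at hleaving
  rw [flowValue_eq_sum_sub_sum G hf.2 hs ht]
  linarith

end Digraph'

@[simp] theorem Fin.val_eq_val_iff_eq_castSucc {n : ℕ} {m : Fin (n + 1)} {a : Fin n} :
    (m : ℕ) = a ↔ m = a.castSucc := by
  rw [Fin.ext_iff, Fin.val_castSucc]

@[simp] theorem Fin.val_eq_val_add_one_iff_eq_succ {n : ℕ} {m : Fin (n + 1)} {a : Fin n} :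
    (m : ℕ) = a + 1 ↔ m = a.succ := by
  rw [Fin.ext_iff, Fin.val_succ]

section MatrixGraph

variable {L r : ℕ}

@[simp] theorem xAt_eq_s {m : ℕ} {i : Fin r} : xAt L r m i = .s ↔ m = 0 := by
  unfold xAt; split_ifs <;> simp_all

@[simp] theorem xAt_eq_x {m : ℕ} {i i' : Fin r} {a : Fin L} :
    xAt L r m i = .x a i' ↔ m = a.val + 1 ∧ i = i' := by
  unfold xAt; split_ifs <;> simp_all [Fin.ext_iff] <;> omega

@[simp] theorem xAt_ne_y {m : ℕ} {i j : Fin r} {a : Fin L} : xAt L r m i ≠ .y a j := by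
  unfold xAt; split_ifs <;> simp

@[simp] theorem yAt_eq_s {m : ℕ} {j : Fin r} : yAt L r m j = .s ↔ m = 0 := by
  unfold yAt; split_ifs <;> simp_all

@[simp] theorem yAt_eq_y {m : ℕ} {j j' : Fin r} {a : Fin L} :
    yAt L r m j = .y a j' ↔ m = a.val + 1 ∧ j = j' := by
  unfold yAt; split_ifs <;> simp_all [Fin.ext_iff] <;> omega

@[simp] theorem yAt_ne_x {m : ℕ} {i j : Fin r} {a : Fin L} : yAt L r m j ≠ .x a i := by
  unfold yAt; split_ifs <;> simp

def Edg.src : Edg L r → Vtx L r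
  | .ex k i => xAt L r k.val i
  | .ey k i => yAt L r k.val i
  | .cross k i _ => .x k i

def Edg.tgt : Edg L r → Vtx L r
  | .ex k i => xAt L r (k.val + 1) i
  | .ey k i => yAt L r (k.val + 1) i
  | .cross k _ j => .y k j

def Edg.equivSum :
    (Fin (L + 1) × Fin r) ⊕ (Fin (L + 1) × Fin r) ⊕ (Fin L × Fin r × Fin r) ≃ Edg L r where
  toFun
    | .inl (m, i) => .ex m i
    | .inr (.inl (m, i)) => .ey m i
    | .inr (.inr (m, i, j)) => .cross m i j
  invFun
    | .ex m i => .inl (m, i)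
    | .ey m i => .inr (.inl (m, i))
    | .cross m i j => .inr (.inr (m, i, j))
  left_inv := by rintro (⟨m, i⟩ | ⟨m, i⟩ | ⟨m, i, j⟩) <;> rfl
  right_inv := by rintro (e | e | e) <;> rfl

variable (Z : Fin L → Fin r → Fin r → Bool)

theorem sum_validEdge {M : Type} [AddCommMonoid M] (g : Edg L r → M) :
    ∑ e : {e : Edg L r // validEdge Z e = true}, g e.1 =
      ∑ m, ∑ i, g (.ex m i) + ∑ m, ∑ i, g (.ey m i) +
        ∑ m, ∑ i, ∑ j, if Z m i j then g (.cross m i j) else 0 := by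
  rw [← Finset.sum_subtype (univ.filter fun e => validEdge Z e = true) (by simp) g,
    Finset.sum_filter, ← Edg.equivSum.sum_comp]
  simp only [Edg.equivSum, Equiv.coe_fn_mk, Fintype.sum_sum_type, Fintype.sum_prod_type, validEdge,
    ↓reduceIte, add_assoc]
  rfl

theorem sum_filter_validEdge {M : Type} [AddCommMonoid M] (q : Edg L r → Prop)
    [DecidablePred q] (g : Edg L r → M) :
    ∑ e : {e : Edg L r // validEdge Z e = true} with q e.1, g e.1 =
      ∑ m, ∑ i, (if q (.ex m i) then g (.ex m i) else 0) +
        ∑ m, ∑ i, (if q (.ey m i) then g (.ey m i) else 0) +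
        ∑ m, ∑ i, ∑ j,
          if q (.cross m i j) then (if Z m i j then g (.cross m i j) else 0) else 0 := by
  rw [Finset.sum_filter]
  exact (sum_validEdge Z fun e => if q e then g e else 0).trans
    (by simp only [← ite_and, and_comm])

section VertexSums

variable {M : Type} [AddCommMonoid M] (g : Edg L r → M)

theorem sum_tgt_eq_x (a : Fin L) (i : Fin r) :
    ∑ e with (matrixGraph Z).tgt e = .x a i, g e.1 = g (.ex a.castSucc i) :=
  (sum_filter_validEdge Z (fun e => e.tgt = .x a i) g).trans (by simp [Edg.tgt, ite_and])

theorem sum_src_eq_x (a : Fin L) (i : Fin r) :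
    ∑ e with (matrixGraph Z).src e = .x a i, g e.1 =
      g (.ex a.succ i) + ∑ j, if Z a i j then g (.cross a i j) else 0 :=
  (sum_filter_validEdge Z (fun e => e.src = .x a i) g).trans (by simp [Edg.src, ite_and])

theorem sum_tgt_eq_y (a : Fin L) (j : Fin r) :
    ∑ e with (matrixGraph Z).tgt e = .y a j, g e.1 =
      g (.ey a.castSucc j) + ∑ i, if Z a i j then g (.cross a i j) else 0 :=
  (sum_filter_validEdge Z (fun e => e.tgt = .y a j) g).trans (by simp [Edg.tgt, ite_and])

theorem sum_src_eq_y (a : Fin L) (j : Fin r) :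
    ∑ e with (matrixGraph Z).src e = .y a j, g e.1 = g (.ey a.succ j) :=
  (sum_filter_validEdge Z (fun e => e.src = .y a j) g).trans (by simp [Edg.src, ite_and])

theorem sum_src_eq_s :
    ∑ e with (matrixGraph Z).src e = .s, g e.1 = ∑ i, g (.ex 0 i) + ∑ i, g (.ey 0 i) :=
  (sum_filter_validEdge Z (fun e => e.src = .s) g).trans (by simp [Edg.src])

theorem sum_tgt_eq_s : ∑ e with (matrixGraph Z).tgt e = .s, g e.1 = 0 :=
  (sum_filter_validEdge Z (fun e => e.tgt = .s) g).trans (by simp [Edg.tgt])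

end VertexSums

theorem matrixGraph_isFlow {g : Edg L r → ℕ} (hg : ∀ e, g e ≤ 1)
    (hx : ∀ a i, g (.ex a.castSucc i) =
      g (.ex a.succ i) + ∑ j, if Z a i j then g (.cross a i j) else 0)
    (hy : ∀ a j, g (.ey a.castSucc j) + ∑ i, (if Z a i j then g (.cross a i j) else 0) =
      g (.ey a.succ j)) :
    (matrixGraph Z).IsFlow .s .t fun e => g e.1 := by
  refine ⟨fun e => hg e.1, ?_⟩
  rintro (_ | _ | ⟨a, i⟩ | ⟨a, j⟩) hs ht
  · exact absurd rfl hs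
  · exact absurd rfl ht
  · rw [sum_tgt_eq_x, sum_src_eq_x, hx]
  · rw [sum_tgt_eq_y, sum_src_eq_y, hy]

theorem matrixGraph_flowValue (g : Edg L r → ℕ) :
    (matrixGraph Z).flowValue .s (fun e => g e.1) =
      ∑ i, (g (.ex 0 i) : ℤ) + ∑ i, (g (.ey 0 i) : ℤ) := by
  rw [Digraph'.flowValue, sum_src_eq_s Z (fun e => (g e : ℤ)),
    sum_tgt_eq_s Z (fun e => (g e : ℤ)), sub_zero]

def rowFlow (I J : Finset (Fin r)) : Edg L r → ℕ
  | .ex _ i => if i ∈ I then 1 else 0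
  | .ey _ j => if j ∈ J then 1 else 0
  | .cross _ _ _ => 0

theorem rowFlow_isFlow (I J : Finset (Fin r)) :
    (matrixGraph Z).IsFlow .s .t fun e => rowFlow I J e.1 :=
  matrixGraph_isFlow Z (by rintro (_ | _ | _) <;> simp [rowFlow, apply_ite (· ≤ 1)])
    (by simp [rowFlow]) (by simp [rowFlow])

theorem rowFlow_flowValue (I J : Finset (Fin r)) :
    (matrixGraph Z).flowValue .s (fun e => rowFlow I J e.1) = I.card + J.card := by
  rw [matrixGraph_flowValue]
  simp [rowFlow]

/-- The row flow without `x`-row `i` and `y`-row `j`, plus the path along `x`-row `i` up to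
`x_{k,i}`, across `(x_{k,i}, y_{k,j})`, and along `y`-row `j` from `y_{k,j}` on. -/
def detourFlow (k : Fin L) (i j : Fin r) : Edg L r → ℕ
  | .ex m i' => if i' = i ∧ k.val < m.val then 0 else 1
  | .ey m j' => if j' = j ∧ m.val ≤ k.val then 0 else 1
  | .cross m i' j' => if m = k ∧ i' = i ∧ j' = j then 1 else 0

theorem detourFlow_isFlow {k : Fin L} {i j : Fin r} (hz : Z k i j) :
    (matrixGraph Z).IsFlow .s .t fun e => detourFlow k i j e.1 := by
  refine matrixGraph_isFlow Z
    (by rintro (_ | _ | _) <;> simp [detourFlow, apply_ite (· ≤ 1)])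
    (fun a i' => ?_) (fun a j' => ?_)
  · rcases eq_or_ne a k with rfl | ha
    · by_cases hi : i' = i
      · rw [Finset.sum_eq_single j (fun x _ hx => by simp [detourFlow, hx]) (by simp)]
        simp [detourFlow, hi, hz]
      · simp [detourFlow, hi]
    · simp [detourFlow, ha, ha.symm.le_iff_lt]
  · rcases eq_or_ne a k with rfl | ha
    · by_cases hj : j' = j
      · rw [Finset.sum_eq_single i (fun x _ hx => by simp [detourFlow, hx]) (by simp)]
        simp [detourFlow, hj, hz]
      · simp [detourFlow, hj]
    · simp [detourFlow, ha, ha.le_iff_lt]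

theorem detourFlow_flowValue (k : Fin L) (i j : Fin r) :
    (matrixGraph Z).flowValue .s (fun e => detourFlow k i j e.1) = 2 * r - 1 := by
  rw [matrixGraph_flowValue]
  have := j.pos
  simp [detourFlow, Finset.sum_ite, Finset.filter_ne']
  omega

theorem matrixGraph_flowValue_le {f : {e : Edg L r // validEdge Z e = true} → ℕ}
    (hf : (matrixGraph Z).IsFlow .s .t f) : (matrixGraph Z).flowValue .s f ≤ 2 * r := by
  have hcut := (matrixGraph Z).flowValue_le_card_of_cut hf (F := ∅) (by simp)
    (Finset.mem_singleton_self _) (by simp) (T := univ.filter fun e => (matrixGraph Z).src e = .s)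
    (fun e he _ _ => by simpa using he)
  have hcard : (univ.filter fun e => (matrixGraph Z).src e = .s).card = 2 * r := by
    rw [Finset.card_eq_sum_ones]
    exact (sum_src_eq_s Z fun _ => 1).trans (by simp [two_mul])
  rwa [hcard, Nat.cast_mul, Nat.cast_two] at hcut

/-- The cut of part (ii) is `{v | cutLevel i j v ≤ k + 1}`: `x_{a,i'}` sits on layer `a + 1`
(paper indexing), one layer higher off row `i`, and `y_{a,j'}` one layer higher on row `j`. -/
def cutLevel (i j : Fin r) : Vtx L r → ℕ
  | .s => 0
  | .t => L + 1
  | .x a i' => a + if i' = i then 1 else 2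
  | .y a j' => a + if j' = j then 2 else 1

theorem cutLevel_xAt_le_iff {i j i' : Fin r} {m k : ℕ} (hm : m ≤ L + 1) (hk : k < L) :
    cutLevel i j (xAt L r m i') ≤ k + 1 ↔ m + (if i' = i then 0 else 1) ≤ k + 1 := by
  unfold xAt; split_ifs <;> simp only [cutLevel] <;> (try split_ifs) <;> omega

theorem cutLevel_yAt_le_iff {i j j' : Fin r} {m k : ℕ} (hm : m ≤ L + 1) (hk : k < L) :
    cutLevel i j (yAt L r m j') ≤ k + 1 ↔ m + (if j' = j then 1 else 0) ≤ k + 1 := by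
  unfold yAt; split_ifs <;> simp only [cutLevel] <;> (try split_ifs) <;> omega

def cutEdges (k : Fin L) (i j : Fin r) : Finset (Edg L r) :=
  (univ.erase i).image (.ex k.castSucc) ∪ (univ.erase j).image (.ey k.succ) ∪ {.cross k i j}

theorem eq_or_mem_cutEdges_of_leaves {k : Fin L} {i j : Fin r} {e : Edg L r}
    (hsrc : cutLevel i j e.src ≤ k + 1) (htgt : ¬ cutLevel i j e.tgt ≤ k + 1) :
    e = .ex k.succ i ∨ e = .ey k.castSucc j ∨ e ∈ cutEdges k i j := by
  rcases e with ⟨m, i'⟩ | ⟨m, j'⟩ | ⟨a, i', j'⟩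
  · rw [Edg.src, cutLevel_xAt_le_iff (m := m) (by omega) k.isLt] at hsrc
    rw [Edg.tgt, cutLevel_xAt_le_iff (m := m + 1) (by omega) k.isLt] at htgt
    by_cases hi : i' = i
    · simp only [hi, if_true] at hsrc htgt
      left
      rw [hi, show m = k.succ from Fin.ext (by rw [Fin.val_succ]; omega)]
    · simp only [hi, if_false] at hsrc htgt
      right; right
      rw [show m = k.castSucc from Fin.ext (by rw [Fin.val_castSucc]; omega)]
      simp [cutEdges, hi]
  · rw [Edg.src, cutLevel_yAt_le_iff (m := m) (by omega) k.isLt] at hsrc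
    rw [Edg.tgt, cutLevel_yAt_le_iff (m := m + 1) (by omega) k.isLt] at htgt
    by_cases hj : j' = j
    · simp only [hj, if_true] at hsrc htgt
      right; left
      rw [hj, show m = k.castSucc from Fin.ext (by rw [Fin.val_castSucc]; omega)]
    · simp only [hj, if_false] at hsrc htgt
      right; right
      rw [show m = k.succ from Fin.ext (by rw [Fin.val_succ]; omega)]
      simp [cutEdges, hj]
  · simp only [Edg.src, Edg.tgt, cutLevel] at hsrc htgt
    right; right
    split_ifs at hsrc htgt with hi hj hj <;> try omega
    rw [hi, hj, show a = k from Fin.ext (by omega)]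
    simp [cutEdges]

theorem card_filter_mem_cutEdges (k : Fin L) (i j : Fin r) :
    (univ.filter fun e : {e : Edg L r // validEdge Z e = true} => e.1 ∈ cutEdges k i j).card =
      2 * (r - 1) + if Z k i j then 1 else 0 := by
  rw [Finset.card_eq_sum_ones]
  rw [sum_filter_validEdge Z (· ∈ cutEdges k i j) fun _ => 1, Finset.sum_comm,
    Finset.sum_comm (s := (univ : Finset (Fin (L + 1))))]
  simp [cutEdges, ite_and, Finset.sum_ite, Finset.filter_ne']
  omega

theorem matrixGraph_flowValue_le_of_delete {k : Fin L} {i j : Fin r}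
    {f : {e : Edg L r // validEdge Z e = true} → ℕ} (hf : (matrixGraph Z).IsFlow .s .t f)
    (hF : ∀ e ∈ ({⟨.ex k.succ i, rfl⟩, ⟨.ey k.castSucc j, rfl⟩} :
      Finset {e : Edg L r // validEdge Z e = true}), f e = 0) :
    (matrixGraph Z).flowValue .s f ≤ if Z k i j then 2 * (r : ℤ) - 1 else 2 * (r : ℤ) - 2 := by
  have hcut := (matrixGraph Z).flowValue_le_card_of_cut hf hF
    (S := univ.filter fun v => cutLevel i j v ≤ k + 1)
    (Finset.mem_filter.2 ⟨Finset.mem_univ _, Nat.zero_le _⟩)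
    (fun ht => not_le.2 (Nat.succ_lt_succ k.isLt) (Finset.mem_filter.1 ht).2)
    (T := univ.filter fun e => e.1 ∈ cutEdges k i j) ?_
  · rw [card_filter_mem_cutEdges, Nat.cast_add, Nat.cast_mul, Nat.cast_pred i.pos] at hcut
    split_ifs at hcut ⊢ <;> push_cast at hcut ⊢ <;> linarith
  intro e hsrc htgt he
  simp only [Finset.mem_filter, Finset.mem_univ, true_and] at hsrc htgt ⊢
  rcases eq_or_mem_cutEdges_of_leaves hsrc htgt with h | h | h
  · exact (he (by simp [Subtype.ext_iff, h])).elim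
  · exact (he (by simp [Subtype.ext_iff, h])).elim
  · exact h

theorem matrixGraph_isMaxFlowValue : (matrixGraph Z).IsMaxFlowValue .s .t ∅ (2 * r) := by
  refine ⟨⟨_, rowFlow_isFlow Z univ univ, by simp, ?_⟩, fun f hf _ => matrixGraph_flowValue_le Z hf⟩
  rw [rowFlow_flowValue]
  simp [two_mul]

theorem matrixGraph_isMaxFlowValue_delete (k : Fin L) (i j : Fin r) :
    (matrixGraph Z).IsMaxFlowValue .s .t
      ({⟨.ex k.succ i, rfl⟩, ⟨.ey k.castSucc j, rfl⟩} :
        Finset {e : Edg L r // validEdge Z e = true})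
      (if Z k i j then 2 * (r : ℤ) - 1 else 2 * (r : ℤ) - 2) := by
  refine ⟨?_, fun f hf hF => matrixGraph_flowValue_le_of_delete Z hf hF⟩
  by_cases hz : Z k i j
  · rw [if_pos hz]
    exact ⟨_, detourFlow_isFlow Z hz, by simp [detourFlow], detourFlow_flowValue Z k i j⟩
  · rw [if_neg hz]
    refine ⟨_, rowFlow_isFlow Z (univ.erase i) (univ.erase j), by simp [rowFlow], ?_⟩
    have := i.pos
    rw [rowFlow_flowValue]
    simp
    omega

end MatrixGraph

theorem stmt4_general (L r : ℕ)
    (Z : Fin L → Fin r → Fin r → Bool) :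
    (matrixGraph Z).IsMaxFlowValue Vtx.s Vtx.t ∅ (2 * r) ∧
    ∀ (k : Fin L) (i j : Fin r),
      (matrixGraph Z).IsMaxFlowValue Vtx.s Vtx.t
        ({⟨Edg.ex k.succ i, rfl⟩, ⟨Edg.ey k.castSucc j, rfl⟩} :
          Finset {e : Edg L r // validEdge Z e = true})
        (if Z k i j then 2 * (r : ℤ) - 1 else 2 * (r : ℤ) - 2) :=
  ⟨matrixGraph_isMaxFlowValue Z, matrixGraph_isMaxFlowValue_delete Z⟩

/-- (i) The maximum `(s,t)`-flow value of `G(Z_1,…,Z_L)` is `2r`;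
(ii) for every `k ∈ {1,…,L}` and `i,j ∈ {1,…,r}`, deleting the edges
`e₁ = (x_{k,i}, x_{k+1,i})` and `e₂ = (y_{k−1,j}, y_{k,j})` drops the maximum
`(s,t)`-flow value to `2r − 1` if `Z_k[i,j] = 1` and to `2r − 2` if `Z_k[i,j] = 0`.
(Here `k : Fin L` encodes the paper index `k+1`, so `e₁` is the `x`-path edge with
index `k+1` and `e₂` the `y`-path edge with index `k`.) -/
theorem stmt4 (L r : ℕ) (hL : 1 ≤ L) (hr : 1 ≤ r)
    (Z : Fin L → Fin r → Fin r → Bool) :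
    (matrixGraph Z).IsMaxFlowValue Vtx.s Vtx.t ∅ (2 * r) ∧
    ∀ (k : Fin L) (i j : Fin r),
      (matrixGraph Z).IsMaxFlowValue Vtx.s Vtx.t
        ({⟨Edg.ex k.succ i, rfl⟩, ⟨Edg.ey k.castSucc j, rfl⟩} :
          Finset {e : Edg L r // validEdge Z e = true})
        (if Z k i j then 2 * (r : ℤ) - 1 else 2 * (r : ℤ) - 2) :=
  stmt4_general L r Z
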